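/- arXiv:2603.18727 — 2 statements merged into one kernel-verified Lean document; each statement's English description precedes it below -/
import Mathlib

section
/- Let M ∈ ℂ^{K×K} be Hermitian positive definite and b ∈ ℂ^K. In the complex conjugate gradient method started from x_0 with r_0 = M x_0 + b, p_0 = r_0, and updates α_k = -(p_k^H r_k)/(p_k^H M p_k), x_{k+1} = x_k + α_k p_k, r_{k+1} = r_k + α_k M p_k, β_{k+1} = -((M p_k)^H r_{k+1})/(p_k^H M p_k), p_{k+1} = r_{k+1} + β_{k+1} p_k: as long as the residuals r_0,...,r_i are nonzero, the residuals are pairwise orthogonal (r_j^H r_l = 0 for j ≠ l) and the directions are pairwise M-conjugate (p_j^H M p_l = 0 for j ≠ l). -/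
/-!
Along a conjugate gradient run, `p_k ⟂ r_{k+1}` and `p_k ⟂_M p_{k+1}` hold at every step by the
very choice of `α_k` and `β_{k+1}` (unconditionally: the denominator `p_k^H M p_k` vanishes
only when `p_k = 0`, and then so do the numerators); this gives `p_k^H r_k = ‖r_k‖²` and
`r_k^H M p_k = p_k^H M p_k`.
Since `r_j` lies in the span of `p_j, p_{j-1}` and, when `r_j ≠ 0`, `M p_j` in the span of
`r_j, r_{j+1}`, orthogonality of the residuals and conjugacy of the directions then propagate
together by induction.
-/

open Matrix
open scoped ComplexOrder

namespace Matrix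

section Hermitian

variable {n R : Type*} [Fintype n] [CommRing R] [StarRing R] {M : Matrix n n R}

lemma IsHermitian.star_mulVec_dotProduct (hM : M.IsHermitian) (u v : n → R) :
    star (M *ᵥ u) ⬝ᵥ v = star u ⬝ᵥ M *ᵥ v := by
  rw [star_mulVec, ← dotProduct_mulVec, hM.eq]

lemma IsHermitian.star_dotProduct_mulVec (hM : M.IsHermitian) (u v : n → R) :
    star (star u ⬝ᵥ M *ᵥ v) = star v ⬝ᵥ M *ᵥ u := by
  rw [← star_dotProduct, hM.star_mulVec_dotProduct]

end Hermitian

lemma PosDef.div_dotProduct_mulVec_mul_cancel {n R : Type*} [Fintype n] [Field R]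
    [PartialOrder R] [StarRing R] {M : Matrix n n R} (hM : M.PosDef) {u : n → R} {a : R}
    (ha : u = 0 → a = 0) :
    a / (star u ⬝ᵥ M *ᵥ u) * (star u ⬝ᵥ M *ᵥ u) = a := by
  rcases eq_or_ne u 0 with rfl | hu
  · simp [ha rfl]
  · exact div_mul_cancel₀ a (hM.dotProduct_mulVec_pos hu).ne'

end Matrix

lemma forall_ne_eq_zero_of_forall_lt {R : Type*} [AddMonoid R] [StarAddMonoid R]
    {f : ℕ → ℕ → R} (hf : ∀ j l, star (f j l) = f l j) {i : ℕ}
    (h : ∀ l ≤ i, ∀ j < l, f j l = 0) : ∀ j ≤ i, ∀ l ≤ i, j ≠ l → f j l = 0 := by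
  intro j hj l hl hjl
  rcases Nat.lt_or_gt_of_ne hjl with hlt | hgt
  · exact h l hl j hlt
  · rw [← hf, h j hj l hgt, star_zero]

variable {n 𝕜 : Type*} [Fintype n] [RCLike 𝕜]

structure IsConjugateGradientRun (M : Matrix n n 𝕜) (r p : ℕ → n → 𝕜) (α β : ℕ → 𝕜) :
    Prop where
  p_zero : p 0 = r 0
  α_eq : ∀ k, α k = -(star (p k) ⬝ᵥ r k) / (star (p k) ⬝ᵥ M *ᵥ p k)
  r_succ : ∀ k, r (k + 1) = r k + α k • M *ᵥ p k
  β_eq : ∀ k, β (k + 1) = -(star (M *ᵥ p k) ⬝ᵥ r (k + 1)) / (star (p k) ⬝ᵥ M *ᵥ p k)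
  p_succ : ∀ k, p (k + 1) = r (k + 1) + β (k + 1) • p k

namespace IsConjugateGradientRun

variable {M : Matrix n n 𝕜} {r p : ℕ → n → 𝕜} {α β : ℕ → 𝕜}

lemma α_mul (hM : M.PosDef) (h : IsConjugateGradientRun M r p α β) (k : ℕ) :
    α k * (star (p k) ⬝ᵥ M *ᵥ p k) = -(star (p k) ⬝ᵥ r k) := by
  rw [h.α_eq, hM.div_dotProduct_mulVec_mul_cancel]
  rintro hp
  simp [hp]

lemma β_mul (hM : M.PosDef) (h : IsConjugateGradientRun M r p α β) (k : ℕ) :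
    β (k + 1) * (star (p k) ⬝ᵥ M *ᵥ p k) = -(star (M *ᵥ p k) ⬝ᵥ r (k + 1)) := by
  rw [h.β_eq, hM.div_dotProduct_mulVec_mul_cancel]
  rintro hp
  simp [hp]

lemma star_p_dotProduct_r_succ (hM : M.PosDef) (h : IsConjugateGradientRun M r p α β)
    (k : ℕ) : star (p k) ⬝ᵥ r (k + 1) = 0 := by
  rw [h.r_succ, dotProduct_add, dotProduct_smul, smul_eq_mul, h.α_mul hM, add_neg_cancel]

lemma star_p_dotProduct_mulVec_p_succ (hM : M.PosDef) (h : IsConjugateGradientRun M r p α β)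
    (k : ℕ) : star (p k) ⬝ᵥ M *ᵥ p (k + 1) = 0 := by
  rw [h.p_succ, mulVec_add, mulVec_smul, dotProduct_add, dotProduct_smul, smul_eq_mul,
    h.β_mul hM, ← hM.1.star_mulVec_dotProduct, add_neg_cancel]

lemma star_p_dotProduct_r_self (hM : M.PosDef) (h : IsConjugateGradientRun M r p α β) :
    ∀ k, star (p k) ⬝ᵥ r k = star (r k) ⬝ᵥ r k
  | 0 => by rw [h.p_zero]
  | k + 1 => by
    rw [h.p_succ, star_add, add_dotProduct, star_smul, smul_dotProduct,
      h.star_p_dotProduct_r_succ hM, smul_zero, add_zero]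

lemma r_succ_eq_sub (h : IsConjugateGradientRun M r p α β) (k : ℕ) :
    r (k + 1) = p (k + 1) - β (k + 1) • p k := by
  rw [h.p_succ, add_sub_cancel_right]

lemma star_r_dotProduct_mulVec_p_self (hM : M.PosDef) (h : IsConjugateGradientRun M r p α β) :
    ∀ k, star (r k) ⬝ᵥ M *ᵥ p k = star (p k) ⬝ᵥ M *ᵥ p k
  | 0 => by rw [h.p_zero]
  | k + 1 => by
    rw [h.r_succ_eq_sub, star_sub, sub_dotProduct, star_smul, smul_dotProduct,
      h.star_p_dotProduct_mulVec_p_succ hM, smul_zero, sub_zero]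

lemma α_ne_zero (hM : M.PosDef) (h : IsConjugateGradientRun M r p α β) {k : ℕ}
    (hr : r k ≠ 0) : α k ≠ 0 := by
  intro hα
  have h0 := h.α_mul hM k
  rw [hα, zero_mul, eq_comm, neg_eq_zero, h.star_p_dotProduct_r_self hM,
    dotProduct_star_self_eq_zero] at h0
  exact hr h0

lemma mulVec_p_eq (hM : M.PosDef) (h : IsConjugateGradientRun M r p α β) {k : ℕ}
    (hr : r k ≠ 0) : M *ᵥ p k = (α k)⁻¹ • (r (k + 1) - r k) := by
  rw [h.r_succ, add_sub_cancel_left, smul_smul, inv_mul_cancel₀ (h.α_ne_zero hM hr), one_smul]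

lemma star_r_dotProduct_mulVec_p_of_lt (h : IsConjugateGradientRun M r p α β) {i : ℕ}
    (hB : ∀ j < i, star (p j) ⬝ᵥ M *ᵥ p i = 0) : ∀ j < i, star (r j) ⬝ᵥ M *ᵥ p i = 0
  | 0, hj => by rw [← h.p_zero, hB 0 hj]
  | j + 1, hj => by
    rw [h.r_succ_eq_sub, star_sub, sub_dotProduct, star_smul, smul_dotProduct, hB _ hj,
      hB j (by omega), smul_zero, sub_zero]

lemma star_r_dotProduct_r_succ (hM : M.PosDef) (h : IsConjugateGradientRun M r p α β) {i : ℕ}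
    (hO : ∀ j < i, star (r j) ⬝ᵥ r i = 0) (hB : ∀ j < i, star (p j) ⬝ᵥ M *ᵥ p i = 0) :
    ∀ j ≤ i, star (r j) ⬝ᵥ r (i + 1) = 0 := by
  intro j hj
  rw [h.r_succ, dotProduct_add, dotProduct_smul, smul_eq_mul]
  rcases hj.lt_or_eq with hj | rfl
  · rw [hO j hj, h.star_r_dotProduct_mulVec_p_of_lt hB j hj, mul_zero, add_zero]
  · rw [h.star_r_dotProduct_mulVec_p_self hM, h.α_mul hM, h.star_p_dotProduct_r_self hM,
      add_neg_cancel]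

lemma star_p_dotProduct_mulVec_p_succ_of_le (hM : M.PosDef)
    (h : IsConjugateGradientRun M r p α β) {i : ℕ} (hnz : ∀ j < i, r j ≠ 0)
    (hO : ∀ j ≤ i, star (r j) ⬝ᵥ r (i + 1) = 0) (hB : ∀ j < i, star (p j) ⬝ᵥ M *ᵥ p i = 0) :
    ∀ j ≤ i, star (p j) ⬝ᵥ M *ᵥ p (i + 1) = 0 := by
  intro j hj
  rcases hj.lt_or_eq with hj | rfl
  · rw [h.p_succ, mulVec_add, mulVec_smul, dotProduct_add, dotProduct_smul, hB j hj, smul_zero,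
      add_zero, ← hM.1.star_mulVec_dotProduct, h.mulVec_p_eq hM (hnz j hj), star_smul,
      smul_dotProduct, star_sub, sub_dotProduct, hO (j + 1) hj, hO j hj.le, sub_zero, smul_zero]
  · exact h.star_p_dotProduct_mulVec_p_succ hM j

theorem orthogonal_and_conjugate (hM : M.PosDef) (h : IsConjugateGradientRun M r p α β) :
    ∀ i, (∀ j < i, r j ≠ 0) →
      ∀ l ≤ i, ∀ j < l, star (r j) ⬝ᵥ r l = 0 ∧ star (p j) ⬝ᵥ M *ᵥ p l = 0
  | 0, _, l, hl, j, hj => by omega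
  | i + 1, hnz, l, hl, j, hj => by
    have ih := h.orthogonal_and_conjugate hM i fun j hj => hnz j (by omega)
    rcases hl.lt_or_eq with hl | rfl
    · exact ih l (by omega) j hj
    have hB : ∀ j < i, star (p j) ⬝ᵥ M *ᵥ p i = 0 := fun j hj => (ih i le_rfl j hj).2
    have hO := h.star_r_dotProduct_r_succ hM (fun j hj => (ih i le_rfl j hj).1) hB
    exact ⟨hO j (by omega), h.star_p_dotProduct_mulVec_p_succ_of_le hM
      (fun j hj => hnz j (by omega)) hO hB j (by omega)⟩

end IsConjugateGradientRun

theorem stmt_7_general (K : ℕ) (M : Matrix (Fin K) (Fin K) ℂ) (hM : M.PosDef)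
    (r p : ℕ → (Fin K → ℂ)) (α β : ℕ → ℂ)
    (hp0 : p 0 = r 0)
    (hα : ∀ k, α k = -(star (p k) ⬝ᵥ r k) / (star (p k) ⬝ᵥ M.mulVec (p k)))
    (hr : ∀ k, r (k + 1) = r k + α k • M.mulVec (p k))
    (hβ : ∀ k, β (k + 1) = -(star (M.mulVec (p k)) ⬝ᵥ r (k + 1)) / (star (p k) ⬝ᵥ M.mulVec (p k)))
    (hp : ∀ k, p (k + 1) = r (k + 1) + β (k + 1) • p k)
    (i : ℕ) (hnz : ∀ j ≤ i, r j ≠ 0) :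
    (∀ j ≤ i, ∀ l ≤ i, j ≠ l → star (r j) ⬝ᵥ r l = 0) ∧
    (∀ j ≤ i, ∀ l ≤ i, j ≠ l → star (p j) ⬝ᵥ M.mulVec (p l) = 0) := by
  have hCG : IsConjugateGradientRun M r p α β := ⟨hp0, hα, hr, hβ, hp⟩
  have key := hCG.orthogonal_and_conjugate hM i fun j hj => hnz j hj.le
  exact ⟨forall_ne_eq_zero_of_forall_lt (fun j l => (star_dotProduct (r l) (r j)).symm)
      fun l hl j hj => (key l hl j hj).1,
    forall_ne_eq_zero_of_forall_lt (fun j l => hM.1.star_dotProduct_mulVec (p j) (p l))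
      fun l hl j hj => (key l hl j hj).2⟩

theorem stmt_7 (K : ℕ) (M : Matrix (Fin K) (Fin K) ℂ) (hM : M.PosDef)
    (b x0 : Fin K → ℂ)
    (x r p : ℕ → (Fin K → ℂ)) (α β : ℕ → ℂ)
    (hx0 : x 0 = x0)
    (hr0 : r 0 = M.mulVec x0 + b)
    (hp0 : p 0 = r 0)
    (hα : ∀ k, α k = -(star (p k) ⬝ᵥ r k) / (star (p k) ⬝ᵥ M.mulVec (p k)))
    (hx : ∀ k, x (k + 1) = x k + α k • p k)
    (hr : ∀ k, r (k + 1) = r k + α k • M.mulVec (p k))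
    (hβ : ∀ k, β (k + 1) = -(star (M.mulVec (p k)) ⬝ᵥ r (k + 1)) / (star (p k) ⬝ᵥ M.mulVec (p k)))
    (hp : ∀ k, p (k + 1) = r (k + 1) + β (k + 1) • p k)
    (i : ℕ) (hnz : ∀ j ≤ i, r j ≠ 0) :
    (∀ j ≤ i, ∀ l ≤ i, j ≠ l → star (r j) ⬝ᵥ r l = 0) ∧
    (∀ j ≤ i, ∀ l ≤ i, j ≠ l → star (p j) ⬝ᵥ M.mulVec (p l) = 0) :=
  stmt_7_general K M hM r p α β hp0 hα hr hβ hp i hnz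
end

section
/- Under the hypotheses of the complex conjugate gradient method with M Hermitian positive definite, the residual at step i+1 is orthogonal to all previous search directions: r_{i+1}^H p_j = 0 for all j ≤ i. -/
open Matrix
open scoped ComplexOrder

private lemma cg_conj_dot {K : ℕ} (u w : Fin K → ℂ) :
    star (star u ⬝ᵥ w) = star w ⬝ᵥ u := by
  rw [star_dotProduct, star_star]

private lemma cg_herm {K : ℕ} {M : Matrix (Fin K) (Fin K) ℂ} (hM : M.IsHermitian)
    (u w : Fin K → ℂ) :
    star (M.mulVec u) ⬝ᵥ w = star u ⬝ᵥ M.mulVec w := by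
  rw [star_mulVec, hM.eq, ← dotProduct_mulVec]

private lemma cg_key {K : ℕ} {M : Matrix (Fin K) (Fin K) ℂ} (hM : M.PosDef)
    (r p : ℕ → (Fin K → ℂ)) (α β : ℕ → ℂ)
    (hp0 : p 0 = r 0)
    (hα : ∀ k, α k = -(star (p k) ⬝ᵥ r k) / (star (p k) ⬝ᵥ M.mulVec (p k)))
    (hr : ∀ k, r (k + 1) = r k + α k • M.mulVec (p k))
    (hβ : ∀ k, β (k + 1) = -(star (M.mulVec (p k)) ⬝ᵥ r (k + 1)) / (star (p k) ⬝ᵥ M.mulVec (p k)))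
    (hp : ∀ k, p (k + 1) = r (k + 1) + β (k + 1) • p k) :
    ∀ i, (∀ k ≤ i, star (p k) ⬝ᵥ M.mulVec (p k) ≠ 0) →
      (∀ j ≤ i, star (r (i + 1)) ⬝ᵥ p j = 0) ∧
      (∀ j ≤ i, star (p (i + 1)) ⬝ᵥ M.mulVec (p j) = 0) := by
  have hHerm : M.IsHermitian := hM.isHermitian
  -- d k is self-conjugate
  have dstar : ∀ k, star (star (p k) ⬝ᵥ M.mulVec (p k)) = star (p k) ⬝ᵥ M.mulVec (p k) := by
    intro k
    rw [cg_conj_dot, cg_herm hHerm]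
  intro i
  induction i using Nat.strong_induction_on with
  | _ i IH =>
  intro hden
  -- residuals up to i are nonzero
  have rnz : ∀ j ≤ i, r j ≠ 0 := by
    intro j hj hrj
    apply hden j hj
    have hpj : p j = 0 := by
      cases j with
      | zero => rw [hp0, hrj]
      | succ k =>
        rw [hp k, hβ k, hrj]
        simp
    rw [hpj]
    simp
  -- p_j^H r_j = r_j^H r_j  for j ≤ i
  have pr : ∀ j ≤ i, star (p j) ⬝ᵥ r j = star (r j) ⬝ᵥ r j := by
    intro j hj
    cases j with
    | zero => rw [hp0]
    | succ k =>
      have hk : k < i := lt_of_lt_of_le (Nat.lt_succ_self k) hj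
      have hA := (IH k hk (fun m hm => hden m (le_trans hm hk.le))).1 k le_rfl
      have : star (p k) ⬝ᵥ r (k + 1) = 0 := by
        have := congrArg star hA
        rwa [cg_conj_dot, star_zero] at this
      rw [hp k, star_add, star_smul, add_dotProduct, smul_dotProduct, this, smul_zero, add_zero]
  -- p_j^H r_j ≠ 0 for j ≤ i
  have prnz : ∀ j ≤ i, star (p j) ⬝ᵥ r j ≠ 0 := by
    intro j hj
    rw [pr j hj]
    simp [dotProduct_star_self_eq_zero, rnz j hj]
  have αnz : ∀ j ≤ i, α j ≠ 0 := by
    intro j hj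
    rw [hα j]
    exact div_ne_zero (neg_ne_zero.mpr (prnz j hj)) (hden j hj)
  -- Statement A
  have A : ∀ j ≤ i, star (r (i + 1)) ⬝ᵥ p j = 0 := by
    intro j hj
    rcases eq_or_lt_of_le hj with rfl | hji
    · -- j = i
      rw [hr j, star_add, star_smul, add_dotProduct, smul_dotProduct]
      have h1 : star (r j) ⬝ᵥ p j = star (star (p j) ⬝ᵥ r j) := (cg_conj_dot _ _).symm
      have h2 : star (M.mulVec (p j)) ⬝ᵥ p j = star (star (p j) ⬝ᵥ M.mulVec (p j)) :=
        (cg_conj_dot _ _).symm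
      rw [h1, h2, hα j, smul_eq_mul, star_div₀, star_neg, dstar j, neg_div, neg_mul,
        div_mul_cancel₀ _ (hden j le_rfl), ← star_neg, ← star_add, add_neg_cancel, star_zero]
    · -- j < i, so i = m + 1
      obtain ⟨m, rfl⟩ : ∃ m, i = m + 1 := ⟨i - 1, by omega⟩
      have hjm : j ≤ m := Nat.lt_succ_iff.mp hji
      have hprev := IH m (Nat.lt_succ_self m) (fun k hk => hden k (le_trans hk (Nat.le_succ m)))
      rw [hr (m + 1), star_add, star_smul, add_dotProduct, smul_dotProduct,
        hprev.1 j hjm, cg_herm hHerm, hprev.2 j hjm, smul_zero, add_zero]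
  -- Statement C : orthogonality to residuals
  have C : ∀ t ≤ i, star (r (i + 1)) ⬝ᵥ r t = 0 := by
    intro t ht
    cases t with
    | zero => rw [← hp0]; exact A 0 (Nat.zero_le i)
    | succ s =>
      have hs : s ≤ i := le_trans (Nat.le_succ s) ht
      have hrs : r (s + 1) = p (s + 1) - β (s + 1) • p s := by
        rw [hp s]; abel
      rw [hrs, dotProduct_sub, dotProduct_smul, A (s + 1) ht, A s hs, smul_zero, sub_zero]
  -- Statement B
  have B : ∀ j ≤ i, star (p (i + 1)) ⬝ᵥ M.mulVec (p j) = 0 := by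
    intro j hj
    rw [hp i, star_add, star_smul, add_dotProduct, smul_dotProduct]
    rcases eq_or_lt_of_le hj with rfl | hji
    · -- j = i
      have hβc : star (β (j + 1)) =
          -(star (r (j + 1)) ⬝ᵥ M.mulVec (p j)) / (star (p j) ⬝ᵥ M.mulVec (p j)) := by
        rw [hβ j, star_div₀, star_neg, cg_conj_dot, dstar j]
      rw [hβc, smul_eq_mul, neg_div, neg_mul, div_mul_cancel₀ _ (hden j le_rfl),
        add_neg_cancel]
    · -- j < i
      obtain ⟨m, hmi⟩ : ∃ m, i = m + 1 := ⟨i - 1, by omega⟩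
      have hjm : j ≤ m := by omega
      have hprev := IH m (by omega) (fun k hk => hden k (by omega))
      have hBm : star (p i) ⬝ᵥ M.mulVec (p j) = 0 := by
        rw [hmi]; exact hprev.2 j hjm
      have h1 : star (r (i + 1)) ⬝ᵥ M.mulVec (p j) = 0 := by
        have hmp : α j • M.mulVec (p j) = r (j + 1) - r j := by
          rw [hr j]; abel
        have h2 : α j * (star (r (i + 1)) ⬝ᵥ M.mulVec (p j)) = 0 := by
          rw [← smul_eq_mul, ← dotProduct_smul, hmp, dotProduct_sub,
            C (j + 1) hji, C j hj, sub_self]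
        exact (mul_eq_zero.mp h2).resolve_left (αnz j hj)
      rw [h1, hBm, smul_zero, add_zero]
  exact ⟨A, B⟩

theorem stmt_8 (K : ℕ) (M : Matrix (Fin K) (Fin K) ℂ) (hM : M.PosDef)
    (b x0 : Fin K → ℂ)
    (x r p : ℕ → (Fin K → ℂ)) (α β : ℕ → ℂ)
    (hx0 : x 0 = x0)
    (hr0 : r 0 = M.mulVec x0 + b)
    (hp0 : p 0 = r 0)
    (hα : ∀ k, α k = -(star (p k) ⬝ᵥ r k) / (star (p k) ⬝ᵥ M.mulVec (p k)))
    (hx : ∀ k, x (k + 1) = x k + α k • p k)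
    (hr : ∀ k, r (k + 1) = r k + α k • M.mulVec (p k))
    (hβ : ∀ k, β (k + 1) = -(star (M.mulVec (p k)) ⬝ᵥ r (k + 1)) / (star (p k) ⬝ᵥ M.mulVec (p k)))
    (hp : ∀ k, p (k + 1) = r (k + 1) + β (k + 1) • p k)
    (i : ℕ) (hden : ∀ k ≤ i, star (p k) ⬝ᵥ M.mulVec (p k) ≠ 0) :
    ∀ j ≤ i, star (r (i + 1)) ⬝ᵥ p j = 0 :=
  (cg_key hM r p α β hp0 hα hr hβ hp i hden).1
end
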